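/- Let P be a Markov kernel on a measurable space E satisfying the global minorization condition (A.2) with d ∈ (0,1): there is a probability measure η on E with P(x,B) ≥ d·η(B) for all x ∈ E and measurable B. Let g : E → ℝ be bounded measurable with ‖g‖_sp < −(1/2)·log(1−d). Then a bounded MPE solution exists: there are a bounded measurable w : E → ℝ and λ ∈ ℝ such that w(x) = g(x) − λ + μ_x(w) for all x ∈ E. -/

import Mathlib

/-!
Relative value iteration `T w = g - g x₀ + μ_·(w) - μ_{x₀}(w)`, started at `0`, converges to a
fixed point, which is an MPE solution. Minorization yields two oscillation estimates. First,
`μ_x(w) - μ_y(w) ≤ log (d + (1 - d) e^{osc w})`, so `T` maps the functions vanishing at `x₀` with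
oscillation at most `R` into themselves once `osc g + log (d + (1 - d) e^R) ≤ R`; such an `R ≥ 0`
exists when `1 - d < e^{-osc g}`, i.e. when `‖g‖_sp < -½ log (1 - d)`. Second, for `f, h` bounded by
`R`, `μ(f) - μ(h)` lies between the means of `f - h` under the tiltings of `μ` by `h` and by `f`,
both minorized by `d e^{-2R} η`; so `T` contracts the oscillation of differences by the factor
`1 - d e^{-2R}`, and the iterates are uniformly Cauchy.
-/

open MeasureTheory ProbabilityTheory

noncomputable def spanSeminorm {E : Type*} (f : E → ℝ) : ℝ :=
  ((⨆ x, f x) - ⨅ x, f x) / 2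

open Real Filter Set
open scoped ENNReal Topology

lemma abs_le_of_sub_le_of_eq_zero {E : Type*} {w : E → ℝ} {x₀ : E} {R : ℝ} (h0 : w x₀ = 0)
    (h : ∀ x y, w x - w y ≤ R) (x : E) : |w x| ≤ R :=
  abs_le.2 ⟨by linarith [h x₀ x], by linarith [h x x₀]⟩

lemma exists_le_and_le_add_of_sub_le {E : Type*} [Nonempty E] {w : E → ℝ} {c : ℝ}
    (h : ∀ x y, w x - w y ≤ c) : ∃ m, ∀ x, m ≤ w x ∧ w x ≤ m + c := by
  obtain ⟨x₀⟩ := ‹Nonempty E›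
  have hbdd : BddBelow (range w) := ⟨w x₀ - c, forall_mem_range.2 fun y => by linarith [h x₀ y]⟩
  refine ⟨⨅ y, w y, fun x => ⟨ciInf_le hbdd x, ?_⟩⟩
  linarith [le_ciInf fun y => (by linarith [h x y] : w x - c ≤ w y)]

lemma sub_le_two_mul_spanSeminorm {E : Type*} {g : E → ℝ} (hA : BddAbove (range g))
    (hB : BddBelow (range g)) (x y : E) : g x - g y ≤ 2 * spanSeminorm g := by
  unfold spanSeminorm
  linarith [le_ciSup hA x, ciInf_le hB y]

/-- The explicit root is `R = log d - log (exp (-s) - (1 - d))`, which solves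
`exp (R - s) = d + (1 - d) * exp R`. -/
lemma exists_nonneg_add_log_le {d s : ℝ} (hd : 0 < d) (hs0 : 0 ≤ s) (hs : 1 - d < exp (-s)) :
    ∃ R, 0 ≤ R ∧ s + log (d + (1 - d) * exp R) ≤ R := by
  set D := exp (-s) - (1 - d)
  have hD : 0 < D := sub_pos.2 hs
  have hDd : D ≤ d := by linarith [exp_le_one_iff.2 (neg_nonpos.2 hs0)]
  refine ⟨log (d / D), log_nonneg ((one_le_div hD).2 hDd), le_of_eq ?_⟩
  have hsum : d + (1 - d) * (d / D) = exp (-s) * (d / D) := by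
    field_simp; ring
  rw [exp_log (by positivity), hsum, log_mul (exp_pos _).ne' (by positivity), log_exp]
  ring

section Integrals

variable {E : Type*} [MeasurableSpace E]

lemma integrable_exp_of_abs_le {μ : Measure E} [IsFiniteMeasure μ] {f : E → ℝ}
    (hf : Measurable f) {R : ℝ} (hfR : ∀ x, |f x| ≤ R) : Integrable (fun x => exp (f x)) μ :=
  .of_mem_Icc 0 (exp R) hf.exp.aemeasurable
    (ae_of_all _ fun x => ⟨(exp_pos (f x)).le, exp_le_exp.2 (le_of_abs_le (hfR x))⟩)

lemma exp_integral_le_integral_exp {μ : Measure E} [IsProbabilityMeasure μ] {u : E → ℝ}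
    (hu : Integrable u μ) (hexp : Integrable (fun x => exp (u x)) μ) :
    exp (∫ x, u x ∂μ) ≤ ∫ x, exp (u x) ∂μ :=
  convexOn_exp.map_integral_le continuousOn_exp isClosed_univ
    (ae_of_all _ fun _ => mem_univ _) hu hexp

variable {η ν : Measure E} {α : ℝ}

lemma smul_le_of_forall_toReal_le [IsFiniteMeasure η] [IsFiniteMeasure ν] (hα : 0 ≤ α)
    (h : ∀ B, MeasurableSet B → α * (η B).toReal ≤ (ν B).toReal) :
    ENNReal.ofReal α • η ≤ ν := by
  refine Measure.le_iff.2 fun B hB => ?_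
  rw [Measure.smul_apply, smul_eq_mul, ← ENNReal.ofReal_toReal (measure_ne_top η B),
    ← ENNReal.ofReal_mul hα, ← ENNReal.ofReal_toReal (measure_ne_top ν B)]
  exact ENNReal.ofReal_le_ofReal (h B hB)

variable [IsProbabilityMeasure η] [IsProbabilityMeasure ν]

lemma add_mul_le_integral_of_smul_le (hα : 0 ≤ α) (hle : ENNReal.ofReal α • η ≤ ν)
    {u : E → ℝ} (hu : Measurable u) {m M : ℝ} (hm : ∀ x, m ≤ u x) (hM : ∀ x, u x ≤ M) :
    α * ∫ x, u x ∂η + (1 - α) * m ≤ ∫ x, u x ∂ν := by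
  have hint : ∀ μ : Measure E, [IsFiniteMeasure μ] → Integrable u μ :=
    fun μ _ => .of_mem_Icc m M hu.aemeasurable (ae_of_all _ fun x => ⟨hm x, hM x⟩)
  have key := integral_mono_measure hle (ae_of_all _ fun x => sub_nonneg.2 (hm x))
    ((hint ν).sub (integrable_const m))
  rw [integral_smul_measure, ENNReal.toReal_ofReal hα, integral_sub (hint η) (integrable_const m),
    integral_sub (hint ν) (integrable_const m)] at key
  simp only [integral_const, probReal_univ, smul_eq_mul] at key
  linarith

lemma integral_le_add_mul_of_smul_le (hα : 0 ≤ α) (hle : ENNReal.ofReal α • η ≤ ν)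
    {u : E → ℝ} (hu : Measurable u) {m M : ℝ} (hm : ∀ x, m ≤ u x) (hM : ∀ x, u x ≤ M) :
    ∫ x, u x ∂ν ≤ α * ∫ x, u x ∂η + (1 - α) * M := by
  have h := add_mul_le_integral_of_smul_le (u := fun x => -u x) hα hle hu.neg
    (fun x => neg_le_neg (hM x)) (fun x => neg_le_neg (hm x))
  rw [integral_neg, integral_neg] at h
  linarith

end Integrals

section EntropicUtility

variable {E : Type*} [MeasurableSpace E]

noncomputable def entropicUtility (μ : Measure E) (f : E → ℝ) : ℝ :=
  log (∫ x, exp (f x) ∂μ)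

lemma Measurable.entropicUtility_kernel {X : Type*} [MeasurableSpace X] (P : Kernel X E)
    {w : E → ℝ} (hw : Measurable w) : Measurable fun x => entropicUtility (P x) w :=
  hw.exp.stronglyMeasurable.integral_kernel.measurable.log

variable {μ : Measure E} [IsProbabilityMeasure μ] {f h : E → ℝ} {R : ℝ}

lemma tendsto_entropicUtility {u : ℕ → E → ℝ} {w : E → ℝ} (hu : ∀ n, Measurable (u n))
    (huR : ∀ n x, |u n x| ≤ R) (hlim : ∀ x, Tendsto (fun n => u n x) atTop (𝓝 (w x))) :
    Tendsto (fun n => entropicUtility μ (u n)) atTop (𝓝 (entropicUtility μ w)) := by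
  have hint : Tendsto (fun n => ∫ x, exp (u n x) ∂μ) atTop (𝓝 (∫ x, exp (w x) ∂μ)) :=
    tendsto_integral_of_dominated_convergence (fun _ => exp R)
      (fun n => (hu n).exp.aestronglyMeasurable) (integrable_const _)
      (fun n => ae_of_all _ fun x => by
        rw [norm_of_nonneg (exp_pos _).le]
        exact exp_le_exp.2 (le_of_abs_le (huR n x)))
      (ae_of_all _ fun x => (continuous_exp.tendsto _).comp (hlim x))
  have hlow : ∀ n, exp (-R) ≤ ∫ x, exp (u n x) ∂μ := fun n => by
    simpa using integral_mono (μ := μ) (integrable_const (exp (-R)))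
      (integrable_exp_of_abs_le (hu n) (huR n)) fun x => exp_le_exp.2 (neg_le_of_abs_le (huR n x))
  have hpos : 0 < ∫ x, exp (w x) ∂μ := (exp_pos _).trans_le (ge_of_tendsto' hint hlow)
  exact ((continuousAt_log hpos.ne').tendsto).comp hint

lemma smul_le_tilted (hf : Measurable f) (hfR : ∀ x, |f x| ≤ R) :
    ENNReal.ofReal (exp (-(2 * R))) • μ ≤ μ.tilted f := by
  have hint := integrable_exp_of_abs_le (μ := μ) hf hfR
  have hZ : ∫ y, exp (f y) ∂μ ≤ exp R := by
    simpa using integral_mono hint (integrable_const (exp R))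
      fun y => exp_le_exp.2 (le_of_abs_le (hfR y))
  rw [← withDensity_const, Measure.tilted]
  refine withDensity_mono (ae_of_all _ fun x => ENNReal.ofReal_le_ofReal ?_)
  calc exp (-(2 * R)) = exp (-R) / exp R := by rw [← exp_sub]; ring_nf
    _ ≤ exp (f x) / ∫ y, exp (f y) ∂μ :=
      div_le_div₀ (exp_pos _).le (exp_le_exp.2 (neg_le_of_abs_le (hfR x)))
        (integral_exp_pos hint) hZ

lemma smul_le_tilted_of_smul_le {η : Measure E} {d : ℝ}
    (hle : ENNReal.ofReal d • η ≤ μ) (hf : Measurable f) (hfR : ∀ x, |f x| ≤ R) :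
    ENNReal.ofReal (d * exp (-(2 * R))) • η ≤ μ.tilted f := by
  rw [mul_comm, ENNReal.ofReal_mul (exp_pos _).le, ← smul_smul]
  exact (smul_mono_right _ hle).trans (smul_le_tilted hf hfR)

lemma entropicUtility_sub_le_integral_tilted (hf : Measurable f) (hfR : ∀ x, |f x| ≤ R)
    (hh : Measurable h) (hhR : ∀ x, |h x| ≤ R) :
    entropicUtility μ f - entropicUtility μ h ≤ ∫ x, (f x - h x) ∂μ.tilted f := by
  have hf_int := integrable_exp_of_abs_le (μ := μ) hf hfR
  have hh_int := integrable_exp_of_abs_le (μ := μ) hh hhR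
  have := isProbabilityMeasure_tilted hf_int
  have hdiff : ∀ x, |h x - f x| ≤ 2 * R := fun x => by
    linarith [abs_sub (h x) (f x), hfR x, hhR x]
  have hjensen : exp (∫ x, (h x - f x) ∂μ.tilted f)
      ≤ (∫ x, exp (h x) ∂μ) / ∫ x, exp (f x) ∂μ := by
    calc _ ≤ ∫ x, exp (h x - f x) ∂μ.tilted f :=
          exp_integral_le_integral_exp
            (.of_bound (hh.sub hf).aestronglyMeasurable (2 * R) (ae_of_all _ hdiff))
            (integrable_exp_of_abs_le (hh.sub hf) hdiff)
      _ = _ := by rw [integral_exp_tilted]; simp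
  have hlog := (log_le_log (exp_pos _) hjensen).trans_eq
    (log_div (integral_exp_pos hh_int).ne' (integral_exp_pos hf_int).ne')
  have hneg : ∫ x, (h x - f x) ∂μ.tilted f = -∫ x, (f x - h x) ∂μ.tilted f := by
    rw [← integral_neg]; simp only [neg_sub]
  rw [log_exp, hneg] at hlog
  unfold entropicUtility
  linarith

variable {η μ₁ μ₂ : Measure E} [IsProbabilityMeasure η] [IsProbabilityMeasure μ₁]
  [IsProbabilityMeasure μ₂] {d c : ℝ}

lemma entropicUtility_sub_le_log (hd0 : 0 ≤ d) (hd1 : d ≤ 1) (hle₁ : ENNReal.ofReal d • η ≤ μ₁)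
    (hle₂ : ENNReal.ofReal d • η ≤ μ₂) {w : E → ℝ} (hw : Measurable w)
    (hwc : ∀ x y, w x - w y ≤ c) :
    entropicUtility μ₁ w - entropicUtility μ₂ w ≤ log (d + (1 - d) * exp c) := by
  have := nonempty_of_isProbabilityMeasure η
  obtain ⟨m, hm⟩ := exists_le_and_le_add_of_sub_le hwc
  have hc : 0 ≤ c := by simpa using hwc (Classical.arbitrary E) (Classical.arbitrary E)
  have hexp_m : ∀ x, exp m ≤ exp (w x) := fun x => exp_le_exp.2 (hm x).1
  have hexp_M : ∀ x, exp (w x) ≤ exp m * exp c := fun x => by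
    rw [← exp_add]; exact exp_le_exp.2 (hm x).2
  have hint : ∀ μ : Measure E, [IsFiniteMeasure μ] → Integrable (fun x => exp (w x)) μ :=
    fun μ _ => .of_mem_Icc _ _ hw.exp.aemeasurable (ae_of_all _ fun x => ⟨hexp_m x, hexp_M x⟩)
  set A := ∫ x, exp (w x) ∂η
  have hA : d * exp m ≤ d * A := mul_le_mul_of_nonneg_left
    (by simpa using integral_mono (μ := η) (integrable_const _) (hint η) hexp_m) hd0
  have hupper := integral_le_add_mul_of_smul_le hd0 hle₁ hw.exp hexp_m hexp_M
  have hlower := add_mul_le_integral_of_smul_le hd0 hle₂ hw.exp hexp_m hexp_M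
  have hL : 0 < d * A + (1 - d) * exp m := by linarith [exp_pos m]
  -- The ratio of the two bounds is largest when `A` is as small as possible, i.e. `A = exp m`.
  have hratio : d * A + (1 - d) * (exp m * exp c)
      ≤ (d + (1 - d) * exp c) * (d * A + (1 - d) * exp m) := by
    have : 0 ≤ (1 - d) * (exp c - 1) * (d * A - d * exp m) :=
      mul_nonneg (mul_nonneg (by linarith) (by linarith [one_le_exp hc])) (by linarith)
    nlinarith
  have hK : 0 < d + (1 - d) * exp c := by
    nlinarith [mul_nonneg (sub_nonneg.2 hd1) (sub_nonneg.2 (one_le_exp hc))]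
  calc entropicUtility μ₁ w - entropicUtility μ₂ w
      ≤ log ((d + (1 - d) * exp c) * (d * A + (1 - d) * exp m)) - log (d * A + (1 - d) * exp m) :=
        sub_le_sub (log_le_log (integral_exp_pos (hint μ₁)) (hupper.trans hratio))
          (log_le_log hL hlower)
    _ = log (d + (1 - d) * exp c) := by rw [log_mul hK.ne' hL.ne']; ring

lemma entropicUtility_sub_sub_le (hd0 : 0 ≤ d) (hle₁ : ENNReal.ofReal d • η ≤ μ₁)
    (hle₂ : ENNReal.ofReal d • η ≤ μ₂) (hf : Measurable f) (hfR : ∀ x, |f x| ≤ R)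
    (hh : Measurable h) (hhR : ∀ x, |h x| ≤ R) (hc : ∀ x y, (f x - h x) - (f y - h y) ≤ c) :
    (entropicUtility μ₁ f - entropicUtility μ₁ h) - (entropicUtility μ₂ f - entropicUtility μ₂ h)
      ≤ (1 - d * exp (-(2 * R))) * c := by
  have := nonempty_of_isProbabilityMeasure η
  have := isProbabilityMeasure_tilted (integrable_exp_of_abs_le (μ := μ₁) hf hfR)
  have := isProbabilityMeasure_tilted (integrable_exp_of_abs_le (μ := μ₂) hh hhR)
  obtain ⟨m, hm⟩ := exists_le_and_le_add_of_sub_le hc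
  have hα : 0 ≤ d * exp (-(2 * R)) := by positivity
  have hupper := integral_le_add_mul_of_smul_le (u := fun x => f x - h x) hα
    (smul_le_tilted_of_smul_le hle₁ hf hfR) (hf.sub hh) (fun x => (hm x).1) (fun x => (hm x).2)
  have hlower := add_mul_le_integral_of_smul_le (u := fun x => f x - h x) hα
    (smul_le_tilted_of_smul_le hle₂ hh hhR) (hf.sub hh) (fun x => (hm x).1) (fun x => (hm x).2)
  have h₁ := entropicUtility_sub_le_integral_tilted (μ := μ₁) hf hfR hh hhR
  have h₂ := entropicUtility_sub_le_integral_tilted (μ := μ₂) hh hhR hf hfR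
  have hneg : ∫ x, (h x - f x) ∂μ₂.tilted h = -∫ x, (f x - h x) ∂μ₂.tilted h := by
    rw [← integral_neg]; simp only [neg_sub]
  linarith

end EntropicUtility

section RelativeValueIteration

variable {E : Type*} [MeasurableSpace E] {P : Kernel E E} {g : E → ℝ} {x₀ : E}

noncomputable def relValueOp (P : Kernel E E) (g : E → ℝ) (x₀ : E) (w : E → ℝ) (x : E) : ℝ :=
  g x - g x₀ + (entropicUtility (P x) w - entropicUtility (P x₀) w)

lemma Measurable.relValueOp (hg : Measurable g) {w : E → ℝ} (hw : Measurable w) :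
    Measurable (relValueOp P g x₀ w) :=
  (hg.sub_const _).add ((Measurable.entropicUtility_kernel P hw).sub_const _)

lemma relValueOp_apply_self (w : E → ℝ) : relValueOp P g x₀ w x₀ = 0 := by
  simp [relValueOp]

variable [IsMarkovKernel P] {η : Measure E} [IsProbabilityMeasure η] {d s R : ℝ}

lemma relValueOp_sub_le (hd0 : 0 ≤ d) (hd1 : d ≤ 1) (hPη : ∀ x, ENNReal.ofReal d • η ≤ P x)
    (hgs : ∀ x y, g x - g y ≤ s) (hR : s + log (d + (1 - d) * exp R) ≤ R) {w : E → ℝ}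
    (hw : Measurable w) (hwR : ∀ x y, w x - w y ≤ R) (x y : E) :
    relValueOp P g x₀ w x - relValueOp P g x₀ w y ≤ R := by
  have := entropicUtility_sub_le_log hd0 hd1 (hPη x) (hPη y) hw hwR
  simp only [relValueOp]
  linarith [hgs x y]

lemma relValueOp_sub_sub_le (hd0 : 0 ≤ d) (hPη : ∀ x, ENNReal.ofReal d • η ≤ P x)
    {w v : E → ℝ} (hw : Measurable w) (hwR : ∀ x, |w x| ≤ R) (hv : Measurable v)
    (hvR : ∀ x, |v x| ≤ R) {c : ℝ} (hc : ∀ x y, (w x - v x) - (w y - v y) ≤ c) (x y : E) :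
    (relValueOp P g x₀ w x - relValueOp P g x₀ v x)
        - (relValueOp P g x₀ w y - relValueOp P g x₀ v y)
      ≤ (1 - d * exp (-(2 * R))) * c := by
  have := entropicUtility_sub_sub_le hd0 (hPη x) (hPη y) hw hwR hv hvR hc
  simp only [relValueOp]
  linarith

lemma relValueOp_iterate_invariant (hd0 : 0 ≤ d) (hd1 : d ≤ 1)
    (hPη : ∀ x, ENNReal.ofReal d • η ≤ P x) (hg : Measurable g) (hgs : ∀ x y, g x - g y ≤ s)
    (hR0 : 0 ≤ R) (hR : s + log (d + (1 - d) * exp R) ≤ R) (n : ℕ) :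
    Measurable ((relValueOp P g x₀)^[n] 0) ∧ (relValueOp P g x₀)^[n] 0 x₀ = 0 ∧
      ∀ x y, (relValueOp P g x₀)^[n] 0 x - (relValueOp P g x₀)^[n] 0 y ≤ R := by
  induction n with
  | zero => exact ⟨measurable_const, rfl, fun _ _ => by simpa using hR0⟩
  | succ n ih =>
    rw [Function.iterate_succ_apply']
    exact ⟨Measurable.relValueOp hg ih.1, relValueOp_apply_self _,
      relValueOp_sub_le hd0 hd1 hPη hgs hR ih.1 ih.2.2⟩

lemma relValueOp_iterate_succ_sub_le (hd0 : 0 ≤ d) (hd1 : d ≤ 1)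
    (hPη : ∀ x, ENNReal.ofReal d • η ≤ P x) (hg : Measurable g) (hgs : ∀ x y, g x - g y ≤ s)
    (hR0 : 0 ≤ R) (hR : s + log (d + (1 - d) * exp R) ≤ R) (n : ℕ) (x y : E) :
    ((relValueOp P g x₀)^[n + 1] 0 x - (relValueOp P g x₀)^[n] 0 x)
      - ((relValueOp P g x₀)^[n + 1] 0 y - (relValueOp P g x₀)^[n] 0 y)
      ≤ (1 - d * exp (-(2 * R))) ^ n * R := by
  have hinv := relValueOp_iterate_invariant (x₀ := x₀) hd0 hd1 hPη hg hgs hR0 hR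
  have hbdd := fun n => abs_le_of_sub_le_of_eq_zero (hinv n).2.1 (hinv n).2.2
  induction n generalizing x y with
  | zero => simpa using (hinv 1).2.2 x y
  | succ n ih =>
    have := relValueOp_sub_sub_le (g := g) (x₀ := x₀) hd0 hPη (hinv _).1 (hbdd _) (hinv _).1
      (hbdd _) ih x y
    rw [← Function.iterate_succ_apply' (relValueOp P g x₀) (n + 1),
      ← Function.iterate_succ_apply' (relValueOp P g x₀) n] at this
    rwa [pow_succ', mul_assoc]

theorem exists_relValueOp_eq_self (hd0 : 0 < d) (hd1 : d ≤ 1)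
    (hPη : ∀ x, ENNReal.ofReal d • η ≤ P x) (hg : Measurable g) (hgs : ∀ x y, g x - g y ≤ s)
    (hR0 : 0 ≤ R) (hR : s + log (d + (1 - d) * exp R) ≤ R) :
    ∃ w, Measurable w ∧ (∀ x, |w x| ≤ R) ∧ relValueOp P g x₀ w = w := by
  set u := fun n => (relValueOp P g x₀)^[n] 0
  have hinv := relValueOp_iterate_invariant (x₀ := x₀) hd0.le hd1 hPη hg hgs hR0 hR
  have hbdd : ∀ n, ∀ x, |u n x| ≤ R := fun n =>
    abs_le_of_sub_le_of_eq_zero (hinv n).2.1 (hinv n).2.2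
  have h0 : ∀ n, u n x₀ = 0 := fun n => (hinv n).2.1
  have hdist : ∀ x n, dist (u n x) (u (n + 1) x) ≤ R * (1 - d * exp (-(2 * R))) ^ n :=
    fun x n => by
      rw [dist_comm, dist_eq, mul_comm]
      exact abs_le_of_sub_le_of_eq_zero (w := fun x => u (n + 1) x - u n x) (x₀ := x₀)
        (by simp only [h0, sub_self])
        (relValueOp_iterate_succ_sub_le hd0.le hd1 hPη hg hgs hR0 hR n) x
  have hβ : 1 - d * exp (-(2 * R)) < 1 := by have := exp_pos (-(2 * R)); nlinarith
  choose w hw using fun x =>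
    cauchySeq_tendsto_of_complete (cauchySeq_of_le_geometric _ R hβ (hdist x))
  have hlim := fun z : E => tendsto_entropicUtility (μ := P z) (fun n => (hinv n).1) hbdd hw
  refine ⟨w, measurable_of_tendsto_metrizable (fun n => (hinv n).1) (tendsto_pi_nhds.2 hw),
    fun x => le_of_tendsto' (hw x).abs (hbdd · x), funext fun x => ?_⟩
  refine tendsto_nhds_unique ?_ ((hw x).comp (tendsto_add_atTop_nat 1))
  simp only [Function.comp_def, u, Function.iterate_succ_apply']
  exact tendsto_const_nhds.add ((hlim x).sub (hlim x₀))

end RelativeValueIteration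

/-- Under the global minorization condition (A.2) with constant `d ∈ (0,1)`, if the bounded
measurable reward `g` satisfies `‖g‖_sp < -(1/2) log (1 - d)`, then a bounded MPE solution
exists. -/
theorem mpe_exists_of_small_span_minorization {E : Type*} [MeasurableSpace E]
    (P : Kernel E E) [IsMarkovKernel P]
    (d : ℝ) (hd : d ∈ Set.Ioo (0 : ℝ) 1)
    (η : Measure E) [IsProbabilityMeasure η]
    (hmin : ∀ x : E, ∀ B : Set E, MeasurableSet B → d * (η B).toReal ≤ (P x B).toReal)
    (g : E → ℝ) (hg_meas : Measurable g) (Cg : ℝ) (hg_bdd : ∀ x, |g x| ≤ Cg)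
    (hg_span : spanSeminorm g < -(1 / 2) * Real.log (1 - d)) :
    ∃ (w : E → ℝ) (lam : ℝ), Measurable w ∧ (∃ C : ℝ, ∀ x, |w x| ≤ C) ∧
      ∀ x : E, w x = g x - lam + Real.log (∫ y, Real.exp (w y) ∂(P x)) := by
  obtain ⟨x₀⟩ := nonempty_of_isProbabilityMeasure η
  have hPη : ∀ x, ENNReal.ofReal d • η ≤ P x :=
    fun x => smul_le_of_forall_toReal_le hd.1.le (hmin x)
  have hgs : ∀ x y, g x - g y ≤ 2 * spanSeminorm g := sub_le_two_mul_spanSeminorm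
    ⟨Cg, forall_mem_range.2 fun x => (abs_le.1 (hg_bdd x)).2⟩
    ⟨-Cg, forall_mem_range.2 fun x => (abs_le.1 (hg_bdd x)).1⟩
  have hs : 1 - d < exp (-(2 * spanSeminorm g)) := by
    rw [← exp_log (sub_pos.2 hd.2)]
    exact exp_lt_exp.2 (by linarith)
  obtain ⟨R, hR0, hR⟩ := exists_nonneg_add_log_le hd.1 (by simpa using hgs x₀ x₀) hs
  obtain ⟨w, hw, hwR, hfix⟩ :=
    exists_relValueOp_eq_self (x₀ := x₀) hd.1 hd.2.le hPη hg_meas hgs hR0 hR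
  refine ⟨w, g x₀ + entropicUtility (P x₀) w, hw, ⟨R, hwR⟩, fun x => ?_⟩
  have := congrFun hfix x
  simp only [relValueOp, entropicUtility] at this ⊢
  linarith
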